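/- arXiv:2511.06502 — 3 statements merged into one kernel-verified Lean document; each statement's English description precedes it below -/
import Mathlib

section
/- If a Pos-enriched category C has weak finite products and weak inserters, then C has all weak finite weighted limits (it is weakly lex). -/
open CategoryTheory

universe w v u v' u' v'' u''

/-- A `Pos`-enriched category: each hom-set carries a partial order and
composition is monotone in both variables. -/
class PosEnriched (C : Type u) [Category.{v} C] where
  homOrder : ∀ X Y : C, PartialOrder (X ⟶ Y)
  comp_mono : ∀ {X Y Z : C} {f f' : X ⟶ Y} {g g' : Y ⟶ Z},
    (homOrder X Y).le f f' → (homOrder Y Z).le g g' → (homOrder X Z).le (f ≫ g) (f' ≫ g')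

attribute [instance] PosEnriched.homOrder

namespace PosEnr

variable {C : Type u} [Category.{v} C] [PosEnriched C]

theorem comp_mono' {X Y Z : C} {f f' : X ⟶ Y} {g g' : Y ⟶ Z} (h : f ≤ f') (h' : g ≤ g') :
    f ≫ g ≤ f' ≫ g' := PosEnriched.comp_mono h h'

/-- `m` is an order-monomorphism (ff-morphism): postcomposition reflects the order
(hence, by antisymmetry, is also injective). -/
def OrderMono {X Y : C} (m : X ⟶ Y) : Prop :=
  ∀ {Z : C} (u v : Z ⟶ X), u ≫ m ≤ v ≫ m → u ≤ v

/-- `e` is an so-morphism: it is left orthogonal, in the `Pos`-enriched sense, to all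
order-monomorphisms (the relevant square of hom-posets is a pullback in `Pos`). -/
def IsSo {A B : C} (e : A ⟶ B) : Prop :=
  ∀ {X Y : C} (m : X ⟶ Y), OrderMono m →
    (∀ (f : A ⟶ X) (g : B ⟶ Y), f ≫ m = e ≫ g → ∃ h : B ⟶ X, e ≫ h = f ∧ h ≫ m = g) ∧
    (∀ h h' : B ⟶ X, e ≫ h ≤ e ≫ h' → h ≫ m ≤ h' ≫ m → h ≤ h')

/-- `e : I ⟶ X` is the (conical, `Pos`-enriched) inserter of the ordered pair `(f, g)`. -/
def IsInserterP {X Y I : C} (f g : X ⟶ Y) (e : I ⟶ X) : Prop :=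
  e ≫ f ≤ e ≫ g ∧
  (∀ {Z : C} (h : Z ⟶ X), h ≫ f ≤ h ≫ g → ∃ u : Z ⟶ I, u ≫ e = h) ∧
  OrderMono e

/-- A weak inserter: only the existence part of the universal property. -/
def IsWeakInserter {X Y I : C} (f g : X ⟶ Y) (e : I ⟶ X) : Prop :=
  e ≫ f ≤ e ≫ g ∧
  (∀ {Z : C} (h : Z ⟶ X), h ≫ f ≤ h ≫ g → ∃ u : Z ⟶ I, u ≫ e = h)

/-- `q : Y ⟶ Q` is the coinserter of the ordered pair `(u, v)`. -/
def IsCoinserterP {X Y Q : C} (u v : X ⟶ Y) (q : Y ⟶ Q) : Prop :=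
  u ≫ q ≤ v ≫ q ∧
  (∀ {Z : C} (h : Y ⟶ Z), u ≫ h ≤ v ≫ h → ∃ t : Q ⟶ Z, q ≫ t = h) ∧
  (∀ {Z : C} (h h' : Q ⟶ Z), q ≫ h ≤ q ≫ h' → h ≤ h')

/-- `(c0, c1)` is the comma object (lax pullback) of the ordered pair `(f, g)`. -/
def IsCommaP {X Y Z P : C} (f : X ⟶ Z) (g : Y ⟶ Z) (c0 : P ⟶ X) (c1 : P ⟶ Y) : Prop :=
  c0 ≫ f ≤ c1 ≫ g ∧
  (∀ {A : C} (u0 : A ⟶ X) (u1 : A ⟶ Y), u0 ≫ f ≤ u1 ≫ g →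
      ∃ w : A ⟶ P, w ≫ c0 = u0 ∧ w ≫ c1 = u1) ∧
  (∀ {A : C} (w w' : A ⟶ P), w ≫ c0 ≤ w' ≫ c0 → w ≫ c1 ≤ w' ≫ c1 → w ≤ w')

/-- An effective epimorphism: a coinserter of some pair. -/
def EffectiveEpiP {Y Q : C} (q : Y ⟶ Q) : Prop :=
  ∃ (X : C) (u v : X ⟶ Y), IsCoinserterP u v q

/-- Binary product in the `Pos`-enriched (conical) sense. -/
def IsBinProdP {X Y P : C} (p : P ⟶ X) (q : P ⟶ Y) : Prop :=
  (∀ {Z : C} (f : Z ⟶ X) (g : Z ⟶ Y), ∃ h : Z ⟶ P, h ≫ p = f ∧ h ≫ q = g) ∧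
  (∀ {Z : C} (h h' : Z ⟶ P), h ≫ p ≤ h' ≫ p → h ≫ q ≤ h' ≫ q → h ≤ h')

/-- Terminal object in the `Pos`-enriched sense. -/
def IsTerminalP (T : C) : Prop :=
  ∀ X : C, ∃ f : X ⟶ T, ∀ g : X ⟶ T, g = f

/-- Product of a (possibly infinite) family in the `Pos`-enriched sense. -/
def IsProdFamP {ι : Type w} (X : ι → C) (P : C) (p : ∀ i, P ⟶ X i) : Prop :=
  (∀ {Z : C} (f : ∀ i, Z ⟶ X i), ∃ h : Z ⟶ P, ∀ i, h ≫ p i = f i) ∧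
  (∀ {Z : C} (h h' : Z ⟶ P), (∀ i, h ≫ p i ≤ h' ≫ p i) → h ≤ h')

/-- Weak product of a family: only the existence part. -/
def IsWeakProdFam {ι : Type w} (X : ι → C) (P : C) (p : ∀ i, P ⟶ X i) : Prop :=
  ∀ {Z : C} (f : ∀ i, Z ⟶ X i), ∃ h : Z ⟶ P, ∀ i, h ≫ p i = f i

/-- Pullback in the `Pos`-enriched (conical) sense. -/
def IsPullbackP {X Y Z P : C} (f : X ⟶ Z) (g : Y ⟶ Z) (p0 : P ⟶ X) (p1 : P ⟶ Y) : Prop :=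
  p0 ≫ f = p1 ≫ g ∧
  (∀ {A : C} (u0 : A ⟶ X) (u1 : A ⟶ Y), u0 ≫ f = u1 ≫ g →
      ∃ w : A ⟶ P, w ≫ p0 = u0 ∧ w ≫ p1 = u1) ∧
  (∀ {A : C} (w w' : A ⟶ P), w ≫ p0 ≤ w' ≫ p0 → w ≫ p1 ≤ w' ≫ p1 → w ≤ w')

/-- A congruence, given by a jointly order-monic pair which is order-reflexive and
transitive (in terms of generalized elements). -/
def IsCongPair {S X : C} (s0 s1 : S ⟶ X) : Prop :=
  (∀ {A : C} (u v : A ⟶ S), u ≫ s0 ≤ v ≫ s0 → u ≫ s1 ≤ v ≫ s1 → u ≤ v) ∧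
  (∀ {A : C} (a0 a1 : A ⟶ X), a0 ≤ a1 → ∃ u : A ⟶ S, u ≫ s0 = a0 ∧ u ≫ s1 = a1) ∧
  (∀ {A : C} (u v : A ⟶ S), u ≫ s1 = v ≫ s0 →
      ∃ t : A ⟶ S, t ≫ s0 = u ≫ s0 ∧ t ≫ s1 = v ≫ s1)

/-- An so-projective object: its covariant hom-functor to `Pos` preserves so-morphisms
(equivalently, sends them to surjections). -/
def SoProjective (P : C) : Prop :=
  ∀ {A B : C} (e : A ⟶ B), IsSo e → ∀ f : P ⟶ B, ∃ g : P ⟶ A, g ≫ e = f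

end PosEnr

/-- A weight `W : D ⥤ Pos` for `Pos`-enriched weighted limits, given concretely. -/
structure PosWeight (D : Type u') [Category.{v'} D] [PosEnriched D] where
  obj : D → Type
  po : ∀ d, PartialOrder (obj d)
  map : ∀ {d d' : D}, (d ⟶ d') → obj d → obj d'
  map_monotone : ∀ {d d' : D} (f : d ⟶ d') (x y : obj d),
    (po d).le x y → (po d').le (map f x) (map f y)
  map_id : ∀ (d : D) (x : obj d), map (𝟙 d) x = x
  map_comp : ∀ {d d' d'' : D} (f : d ⟶ d') (g : d' ⟶ d'') (x : obj d),
    map (f ≫ g) x = map g (map f x)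
  map_le : ∀ {d d' : D} {f g : d ⟶ d'}, f ≤ g → ∀ x : obj d, (po d').le (map f x) (map g x)

attribute [instance] PosWeight.po

/-- A finite weight: finitely many objects, finite hom-posets, finite values. -/
def PosWeight.IsFiniteWeight {D : Type u'} [Category.{v'} D] [PosEnriched D]
    (W : PosWeight D) : Prop :=
  Finite D ∧ (∀ d d' : D, Finite (d ⟶ d')) ∧ ∀ d, Finite (W.obj d)

/-- A `Pos`-enriched (locally monotone) functor. -/
structure PosFunctor (C : Type u) (E : Type u') [Category.{v} C] [Category.{v'} E]
    [PosEnriched C] [PosEnriched E] where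
  toFunctor : C ⥤ E
  map_le : ∀ {X Y : C} {f g : X ⟶ Y}, f ≤ g → toFunctor.map f ≤ toFunctor.map g

/-- Composition of `Pos`-enriched functors. -/
def PosFunctor.comp {D : Type u''} {C : Type u} {E : Type u'}
    [Category.{v''} D] [Category.{v} C] [Category.{v'} E]
    [PosEnriched D] [PosEnriched C] [PosEnriched E]
    (G : PosFunctor D C) (F : PosFunctor C E) : PosFunctor D E where
  toFunctor := G.toFunctor ⋙ F.toFunctor
  map_le h := F.map_le (G.map_le h)

/-- A cylinder (`Pos`-natural transformation) `W ⟶ C(L, F-)`. -/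
structure Cylinder {D : Type u'} [Category.{v'} D] [PosEnriched D] (W : PosWeight D)
    {E : Type u} [Category.{v} E] [PosEnriched E] (F : PosFunctor D E) (L : E) where
  app : ∀ d : D, W.obj d → (L ⟶ F.toFunctor.obj d)
  monotone : ∀ (d : D) (x y : W.obj d), (W.po d).le x y → app d x ≤ app d y
  naturality : ∀ {d d' : D} (f : d ⟶ d') (x : W.obj d),
    app d x ≫ F.toFunctor.map f = app d' (W.map f x)

/-- The image of a cylinder under a `Pos`-enriched functor. -/
def Cylinder.mapF {D : Type u''} {C : Type u} {E : Type u'}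
    [Category.{v''} D] [Category.{v} C] [Category.{v'} E]
    [PosEnriched D] [PosEnriched C] [PosEnriched E]
    {W : PosWeight D} {G : PosFunctor D C} {L : C}
    (F : PosFunctor C E) (c : Cylinder W G L) :
    Cylinder W (G.comp F) (F.toFunctor.obj L) where
  app d x := F.toFunctor.map (c.app d x)
  monotone d x y h := F.map_le (c.monotone d x y h)
  naturality f x := by
    show F.toFunctor.map _ ≫ F.toFunctor.map _ = _
    rw [← F.toFunctor.map_comp, c.naturality]

/-- `L` with cylinder `c` is a weak `W`-weighted limit of `F`:
the induced comparison maps on hom-posets are surjective. -/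
def IsWeakWeightedLimitP {D : Type u'} [Category.{v'} D] [PosEnriched D] (W : PosWeight D)
    {E : Type u} [Category.{v} E] [PosEnriched E] (F : PosFunctor D E)
    (L : E) (c : Cylinder W F L) : Prop :=
  ∀ (Z : E) (φ : Cylinder W F Z), ∃ h : Z ⟶ L, ∀ (d : D) (x : W.obj d),
    h ≫ c.app d x = φ.app d x

/-- `L` with cylinder `c` is a (strong) `W`-weighted limit of `F`. -/
def IsWeightedLimitP {D : Type u'} [Category.{v'} D] [PosEnriched D] (W : PosWeight D)
    {E : Type u} [Category.{v} E] [PosEnriched E] (F : PosFunctor D E)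
    (L : E) (c : Cylinder W F L) : Prop :=
  IsWeakWeightedLimitP W F L c ∧
  ∀ (Z : E) (h h' : Z ⟶ L), (∀ (d : D) (x : W.obj d), h ≫ c.app d x ≤ h' ≫ c.app d x) → h ≤ h'

/-- A weakly lex `Pos`-category: all weak finite weighted limits exist. -/
def WeaklyLex (C : Type u) [Category.{v} C] [PosEnriched C] : Prop :=
  ∀ (D : Type) [SmallCategory D] [PosEnriched D] (W : PosWeight D) (F : PosFunctor D C),
    W.IsFiniteWeight → ∃ (L : C) (c : Cylinder W F L), IsWeakWeightedLimitP W F L c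

/-- All finite weighted limits exist (in the strong sense). -/
def HasFiniteWeightedLimitsP (C : Type u) [Category.{v} C] [PosEnriched C] : Prop :=
  ∀ (D : Type) [SmallCategory D] [PosEnriched D] (W : PosWeight D) (F : PosFunctor D C),
    W.IsFiniteWeight → ∃ (L : C) (c : Cylinder W F L), IsWeightedLimitP W F L c

open PosEnr

/-- A regular `Pos`-enriched category. -/
def IsRegularCat (C : Type u) [Category.{v} C] [PosEnriched C] : Prop :=
  HasFiniteWeightedLimitsP C ∧
  (∀ {X Y : C} (f : X ⟶ Y), ∃ (I : C) (e : X ⟶ I) (m : I ⟶ Y),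
      IsSo e ∧ OrderMono m ∧ e ≫ m = f) ∧
  (∀ {X Y Z P : C} (f : X ⟶ Z) (g : Y ⟶ Z) (p0 : P ⟶ X) (p1 : P ⟶ Y),
      IsPullbackP f g p0 p1 → IsSo f → IsSo p1)

/-- An exact `Pos`-enriched category: regular, and every congruence is effective,
i.e. is the kernel congruence (comma object `q/q`) of some morphism. -/
def IsExactCat (C : Type u) [Category.{v} C] [PosEnriched C] : Prop :=
  IsRegularCat C ∧
  ∀ {S X : C} (s0 s1 : S ⟶ X), IsCongPair s0 s1 →
    ∃ (Q : C) (q : X ⟶ Q), IsCommaP q q s0 s1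

/-- Fully order-faithful: full and order-reflecting (hence faithful) on hom-posets. -/
def FullyOrderFaithful {C : Type u} {E : Type u'} [Category.{v} C] [Category.{v'} E]
    [PosEnriched C] [PosEnriched E] (F : PosFunctor C E) : Prop :=
  (∀ {X Y : C} (g : F.toFunctor.obj X ⟶ F.toFunctor.obj Y), ∃ f : X ⟶ Y, F.toFunctor.map f = g) ∧
  (∀ {X Y : C} (f g : X ⟶ Y), F.toFunctor.map f ≤ F.toFunctor.map g → f ≤ g)

/-- An equivalence of `Pos`-enriched categories. -/
def IsEquivP {C : Type u} {E : Type u'} [Category.{v} C] [Category.{v'} E]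
    [PosEnriched C] [PosEnriched E] (F : PosFunctor C E) : Prop :=
  FullyOrderFaithful F ∧ ∀ Y : E, ∃ X : C, Nonempty (F.toFunctor.obj X ≅ Y)

/-- Preservation of all finite weighted limits by a `Pos`-enriched functor. -/
def PreservesFiniteWeightedLimitsP {C : Type u} {E : Type u'} [Category.{v} C] [Category.{v'} E]
    [PosEnriched C] [PosEnriched E] (F : PosFunctor C E) : Prop :=
  ∀ (D : Type) [SmallCategory D] [PosEnriched D] (W : PosWeight D), W.IsFiniteWeight →
    ∀ (G : PosFunctor D C) (L : C) (c : Cylinder W G L),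
      IsWeightedLimitP W G L c →
      IsWeightedLimitP W (G.comp F) (F.toFunctor.obj L) (c.mapF F)

/-- A regular `Pos`-enriched functor: preserves finite weighted limits and effective
epimorphisms. -/
def IsRegularFunctor {C : Type u} {E : Type u'} [Category.{v} C] [Category.{v'} E]
    [PosEnriched C] [PosEnriched E] (F : PosFunctor C E) : Prop :=
  PreservesFiniteWeightedLimitsP F ∧
  ∀ {X Y : C} (e : X ⟶ Y), EffectiveEpiP e → EffectiveEpiP (F.toFunctor.map e)

/-- A left covering functor: for every weak finite weighted limit in the domain, any
comparison morphism into the corresponding (strong) limit in the codomain is an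
effective epimorphism. -/
def LeftCovering {C : Type u} {E : Type u'} [Category.{v} C] [Category.{v'} E]
    [PosEnriched C] [PosEnriched E] (F : PosFunctor C E) : Prop :=
  ∀ (D : Type) [SmallCategory D] [PosEnriched D] (W : PosWeight D), W.IsFiniteWeight →
    ∀ (G : PosFunctor D C) (L : C) (c : Cylinder W G L), IsWeakWeightedLimitP W G L c →
    ∀ (L' : E) (c' : Cylinder W (G.comp F) L'), IsWeightedLimitP W (G.comp F) L' c' →
    ∀ h : F.toFunctor.obj L ⟶ L', (∀ (d : D) (x : W.obj d),
        h ≫ c'.app d x = F.toFunctor.map (c.app d x)) →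
      EffectiveEpiP h

/-- The full subcategory of a `Pos`-enriched category is `Pos`-enriched. -/
instance fullSubPosEnriched {C : Type u} [Category.{v} C] [PosEnriched C] (Z : C → Prop) :
    PosEnriched (ObjectProperty.FullSubcategory Z) where
  homOrder X Y := PartialOrder.lift (fun f : X ⟶ Y => f.hom) (fun _ _ h => InducedCategory.hom_ext h)
  comp_mono h h' := PosEnriched.comp_mono h h'

/-! ## The exact completion -/

open PosEnr

/-- A pseudocongruence in a `Pos`-enriched category: an order-reflexive and transitive
parallel pair. These are the objects of the exact completion. -/
structure ExObj (C : Type u) [Category.{v} C] [PosEnriched C] where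
  X : C
  R : C
  r0 : R ⟶ X
  r1 : R ⟶ X
  orefl : ∀ {A : C} (a0 a1 : A ⟶ X), a0 ≤ a1 → ∃ u : A ⟶ R, u ≫ r0 = a0 ∧ u ≫ r1 = a1
  tra : ∀ {A : C} (u v : A ⟶ R), u ≫ r1 = v ≫ r0 →
    ∃ t : A ⟶ R, t ≫ r0 = u ≫ r0 ∧ t ≫ r1 = v ≫ r1

namespace ExObj

variable {C : Type u} [Category.{v} C] [PosEnriched C]

/-- `f : X ⟶ Y` is compatible from `(X,R)` to `(Y,S)`. -/
def Compat (A B : ExObj C) (f : A.X ⟶ B.X) : Prop :=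
  ∃ fb : A.R ⟶ B.R, fb ≫ B.r0 = A.r0 ≫ f ∧ fb ≫ B.r1 = A.r1 ≫ f

/-- The preorder `f ≼ g` on compatible morphisms, given by factoring `(f,g)` through
the codomain pseudocongruence. -/
def Pre (A B : ExObj C) (f g : A.X ⟶ B.X) : Prop :=
  ∃ s : A.X ⟶ B.R, s ≫ B.r0 = f ∧ s ≫ B.r1 = g

theorem Pre.refl (A B : ExObj C) (f : A.X ⟶ B.X) : Pre A B f f := by
  obtain ⟨u, h0, h1⟩ := B.orefl f f le_rfl
  exact ⟨u, h0, h1⟩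

theorem Pre.trans' {A B : ExObj C} {f g h : A.X ⟶ B.X}
    (h1 : Pre A B f g) (h2 : Pre A B g h) : Pre A B f h := by
  obtain ⟨s, hs0, hs1⟩ := h1
  obtain ⟨t, ht0, ht1⟩ := h2
  obtain ⟨w, hw0, hw1⟩ := B.tra s t (by rw [hs1, ht0])
  exact ⟨w, by rw [hw0, hs0], by rw [hw1, ht1]⟩

theorem Compat.comp {A B D : ExObj C} {f : A.X ⟶ B.X} {g : B.X ⟶ D.X}
    (hf : Compat A B f) (hg : Compat B D g) : Compat A D (f ≫ g) := by
  obtain ⟨fb, h0, h1⟩ := hf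
  obtain ⟨gb, k0, k1⟩ := hg
  refine ⟨fb ≫ gb, ?_, ?_⟩
  · rw [Category.assoc, k0, ← Category.assoc, h0, Category.assoc]
  · rw [Category.assoc, k1, ← Category.assoc, h1, Category.assoc]

theorem Pre.comp_left {A B D : ExObj C} {f f' : A.X ⟶ B.X} (g : B.X ⟶ D.X)
    (hg : Compat B D g) (h : Pre A B f f') : Pre A D (f ≫ g) (f' ≫ g) := by
  obtain ⟨s, hs0, hs1⟩ := h
  obtain ⟨gb, k0, k1⟩ := hg
  refine ⟨s ≫ gb, ?_, ?_⟩
  · rw [Category.assoc, k0, ← Category.assoc, hs0]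
  · rw [Category.assoc, k1, ← Category.assoc, hs1]

theorem Pre.comp_right {A B D : ExObj C} (f : A.X ⟶ B.X) {g g' : B.X ⟶ D.X}
    (h : Pre B D g g') : Pre A D (f ≫ g) (f ≫ g') := by
  obtain ⟨s, hs0, hs1⟩ := h
  exact ⟨f ≫ s, by rw [Category.assoc, hs0], by rw [Category.assoc, hs1]⟩

theorem Pre.compCongr {A B D : ExObj C} {f f' : A.X ⟶ B.X} {g g' : B.X ⟶ D.X}
    (hg : Compat B D g) (h1 : Pre A B f f') (h2 : Pre B D g g') :
    Pre A D (f ≫ g) (f' ≫ g') :=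
  (Pre.comp_left g hg h1).trans' (Pre.comp_right f' h2)

/-- The equivalence relation on compatible morphisms. -/
def exSetoid (A B : ExObj C) : Setoid {f : A.X ⟶ B.X // Compat A B f} where
  r f g := Pre A B f.1 g.1 ∧ Pre A B g.1 f.1
  iseqv := ⟨fun f => ⟨Pre.refl A B f.1, Pre.refl A B f.1⟩, fun h => ⟨h.2, h.1⟩,
    fun h1 h2 => ⟨h1.1.trans' h2.1, h2.2.trans' h1.2⟩⟩

/-- The exact completion `C_ex` as a category: objects are pseudocongruences, morphisms
are equivalence classes of compatible morphisms. -/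
instance exCategory : Category (ExObj C) where
  Hom A B := Quotient (exSetoid A B)
  id A := Quotient.mk _ ⟨𝟙 A.X, ⟨𝟙 A.R, by simp, by simp⟩⟩
  comp {A B D} f g :=
    Quotient.liftOn₂ f g (fun f g => Quotient.mk _ ⟨f.1 ≫ g.1, f.2.comp g.2⟩)
      (fun a b a' b' ha hb => Quotient.sound
        ⟨Pre.compCongr b.2 ha.1 hb.1, Pre.compCongr b'.2 ha.2 hb.2⟩)
  id_comp {A B} f := Quotient.inductionOn f fun f => Quotient.sound (by
    constructor <;> · simp only [Category.id_comp]; exact Pre.refl A B f.1)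
  comp_id {A B} f := Quotient.inductionOn f fun f => Quotient.sound (by
    constructor <;> · simp only [Category.comp_id]; exact Pre.refl A B f.1)
  assoc {A B D E} f g h := Quotient.inductionOn₃ f g h fun f g h => Quotient.sound (by
    constructor <;> · simp only [Category.assoc]; exact Pre.refl A E _)

/-- The `Pos`-enrichment of the exact completion. -/
instance exPosEnriched : PosEnriched (ExObj C) where
  homOrder A B :=
    { le := fun f g => Quotient.liftOn₂ f g (fun f g => Pre A B f.1 g.1)
        (fun a b a' b' ha hb => propext
          ⟨fun h => (ha.2.trans' h).trans' hb.1, fun h => (ha.1.trans' h).trans' hb.2⟩)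
      le_refl := fun f => Quotient.inductionOn f fun f => Pre.refl A B f.1
      le_trans := fun f g h => Quotient.inductionOn₃ f g h
        (fun f g h h1 h2 => Pre.trans' h1 h2)
      le_antisymm := fun f g => Quotient.inductionOn₂ f g
        (fun f g h1 h2 => Quotient.sound ⟨h1, h2⟩) }
  comp_mono {A B D} {f f'} {g g'} h h' := by
    revert h h'
    refine Quotient.inductionOn₂ f f' (fun a a' => Quotient.inductionOn₂ g g'
      (fun b b' h h' => ?_))
    exact Pre.compCongr b.2 h h'

end ExObj

/-! ## The canonical embedding `Γ : C → C_ex` -/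

namespace ExObj

variable {C : Type u} [Category.{v} C] [PosEnriched C]

variable (I : C → C) (i0 i1 : ∀ X : C, I X ⟶ X)

/-- The pseudocongruence `(X, I_X)` associated to a chosen weak comma object `I_X` of
`(1_X, 1_X)`. -/
def commaExObj (hle : ∀ X, i0 X ≤ i1 X)
    (hfac : ∀ (X : C) {A : C} (a0 a1 : A ⟶ X), a0 ≤ a1 →
      ∃ u : A ⟶ I X, u ≫ i0 X = a0 ∧ u ≫ i1 X = a1) (X : C) : ExObj C where
  X := X
  R := I X
  r0 := i0 X
  r1 := i1 X
  orefl a0 a1 h := hfac X a0 a1 h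
  tra u v huv := by
    refine hfac X _ _ ?_
    calc u ≫ i0 X ≤ u ≫ i1 X := PosEnriched.comp_mono le_rfl (hle X)
      _ = v ≫ i0 X := huv
      _ ≤ v ≫ i1 X := PosEnriched.comp_mono le_rfl (hle X)

/-- The canonical functor `Γ : C → C_ex`, `X ↦ (X, I_X)`, `f ↦ [f]`. -/
def GammaFunc (hle : ∀ X, i0 X ≤ i1 X)
    (hfac : ∀ (X : C) {A : C} (a0 a1 : A ⟶ X), a0 ≤ a1 →
      ∃ u : A ⟶ I X, u ≫ i0 X = a0 ∧ u ≫ i1 X = a1) : C ⥤ ExObj C where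
  obj X := commaExObj I i0 i1 hle hfac X
  map {X Y} f := Quotient.mk _ ⟨f, by
    obtain ⟨u, h0, h1⟩ := hfac Y (i0 X ≫ f) (i1 X ≫ f)
      (PosEnriched.comp_mono (hle X) le_rfl)
    exact ⟨u, h0, h1⟩⟩
  map_id X := Quotient.sound (by
    constructor <;> exact Pre.refl _ _ _)
  map_comp f g := Quotient.sound (by
    constructor <;> exact Pre.refl _ _ _)

/-- The canonical quotient morphism `[1_X] : Γ X → (X, R)` in `C_ex`. -/
def exQuot (hle : ∀ X, i0 X ≤ i1 X)
    (hfac : ∀ (X : C) {A : C} (a0 a1 : A ⟶ X), a0 ≤ a1 →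
      ∃ u : A ⟶ I X, u ≫ i0 X = a0 ∧ u ≫ i1 X = a1) (A : ExObj C) :
    (GammaFunc I i0 i1 hle hfac).obj A.X ⟶ A :=
  Quotient.mk _ ⟨𝟙 A.X, by
    obtain ⟨u, h0, h1⟩ := A.orefl (i0 A.X) (i1 A.X) (hle A.X)
    exact ⟨u, by simpa [GammaFunc, commaExObj] using h0, by simpa [GammaFunc, commaExObj] using h1⟩⟩

end ExObj
/-!
A cylinder `W ⟹ C(Z, F-)` is a family of maps `Z ⟶ F d` indexed by the finitely many pairs
`(d, x ∈ W d)`, subject to finitely many inequalities (each naturality equation being two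
of them). A weak product of the `F d` over all `(d, x)` carries every such family; cutting it
down by one weak inserter per inequality leaves an object whose projections form a cylinder
through which every cylinder factors.
-/

namespace PosEnr

variable {C : Type u} [Category.{v} C] [PosEnriched C]

def IsWeakJointInserter {ι : Type w} {X E : C} {T : ι → C} (f g : ∀ i, X ⟶ T i)
    (e : E ⟶ X) : Prop :=
  (∀ i, e ≫ f i ≤ e ≫ g i) ∧
  ∀ {Z : C} (h : Z ⟶ X), (∀ i, h ≫ f i ≤ h ≫ g i) → ∃ u : Z ⟶ E, u ≫ e = h

theorem isWeakJointInserter_id_of_isEmpty {ι : Type w} [IsEmpty ι] {X : C} {T : ι → C}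
    (f g : ∀ i, X ⟶ T i) : IsWeakJointInserter f g (𝟙 X) :=
  ⟨isEmptyElim, fun h _ => ⟨h, Category.comp_id h⟩⟩

theorem isWeakJointInserter_equiv_comp_iff {ι κ : Type w} (σ : κ ≃ ι) {X E : C}
    {T : ι → C} {f g : ∀ i, X ⟶ T i} {e : E ⟶ X} :
    IsWeakJointInserter (fun k => f (σ k)) (fun k => g (σ k)) e ↔
      IsWeakJointInserter f g e := by
  simp only [IsWeakJointInserter, σ.surjective.forall]

theorem IsWeakJointInserter.comp_weakInserter {ι : Type w} {X E E' : C} {T : Option ι → C}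
    {f g : ∀ i, X ⟶ T i} {e : E ⟶ X}
    (he : IsWeakJointInserter (fun i => f (some i)) (fun i => g (some i)) e) {e' : E' ⟶ E}
    (he' : IsWeakInserter (e ≫ f none) (e ≫ g none) e') :
    IsWeakJointInserter f g (e' ≫ e) := by
  refine ⟨fun i => ?_, fun h hh => ?_⟩
  · cases i with
    | none => simpa only [Category.assoc] using he'.1
    | some i => simpa only [Category.assoc] using comp_mono' le_rfl (he.1 i)
  · obtain ⟨u, rfl⟩ := he.2 h fun i => hh (some i)
    obtain ⟨u', rfl⟩ := he'.2 u (by simpa only [Category.assoc] using hh none)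
    exact ⟨u', (Category.assoc _ _ _).symm⟩

theorem exists_isWeakJointInserter
    (hins : ∀ {X Y : C} (f g : X ⟶ Y), ∃ (E : C) (e : E ⟶ X), IsWeakInserter f g e)
    {ι : Type w} [Finite ι] {X : C} {T : ι → C} (f g : ∀ i, X ⟶ T i) :
    ∃ (E : C) (e : E ⟶ X), IsWeakJointInserter f g e := by
  induction ι using Finite.induction_empty_option with
  | of_equiv σ ih =>
    obtain ⟨E, e, he⟩ := ih (fun k => f (σ k)) (fun k => g (σ k))
    exact ⟨E, e, (isWeakJointInserter_equiv_comp_iff σ).1 he⟩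
  | h_empty => exact ⟨X, 𝟙 X, isWeakJointInserter_id_of_isEmpty f g⟩
  | h_option ih =>
    obtain ⟨E, e, he⟩ := ih (fun i => f (some i)) (fun i => g (some i))
    obtain ⟨E', e', he'⟩ := hins (e ≫ f none) (e ≫ g none)
    exact ⟨E', e' ≫ e, he.comp_weakInserter he'⟩

section CylinderIneq

variable {D : Type u'} [Category.{v'} D] [PosEnriched D] (W : PosWeight D)

/-- Indices of the inequalities cutting out the cylinders among the families
`φ (d, x) : Z ⟶ F d`: one per `x ≤ y` in some `W d`, and two (oriented by the `Bool`) per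
naturality equation. -/
abbrev CylinderIneq : Type (max u' v') :=
  (Σ d, {q : W.obj d × W.obj d // q.1 ≤ q.2}) ⊕ (Σ d d', (d ⟶ d') × W.obj d) × Bool

variable {W}

def CylinderIneq.target : CylinderIneq W → D
  | .inl k => k.1
  | .inr k => k.1.2.1

variable (F : PosFunctor D C) {Z : C}

def CylinderIneq.lhs (φ : ∀ i : Σ d, W.obj d, Z ⟶ F.toFunctor.obj i.1) :
    ∀ k : CylinderIneq W, Z ⟶ F.toFunctor.obj k.target
  | .inl ⟨d, ⟨(x, _), _⟩⟩ => φ ⟨d, x⟩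
  | .inr (⟨_, _, f, x⟩, true) => φ ⟨_, x⟩ ≫ F.toFunctor.map f
  | .inr (⟨_, _, f, x⟩, false) => φ ⟨_, W.map f x⟩

def CylinderIneq.rhs (φ : ∀ i : Σ d, W.obj d, Z ⟶ F.toFunctor.obj i.1) :
    ∀ k : CylinderIneq W, Z ⟶ F.toFunctor.obj k.target
  | .inl ⟨d, ⟨(_, y), _⟩⟩ => φ ⟨d, y⟩
  | .inr (⟨_, _, f, x⟩, true) => φ ⟨_, W.map f x⟩
  | .inr (⟨_, _, f, x⟩, false) => φ ⟨_, x⟩ ≫ F.toFunctor.map f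

variable {F}

theorem CylinderIneq.lhs_comp {Y : C} (h : Y ⟶ Z)
    (φ : ∀ i : Σ d, W.obj d, Z ⟶ F.toFunctor.obj i.1) (k : CylinderIneq W) :
    lhs F (fun i => h ≫ φ i) k = h ≫ lhs F φ k := by
  rcases k with ⟨_, ⟨_, _⟩, _⟩ | ⟨⟨_, _, _, _⟩, _ | _⟩ <;>
    first | rfl | exact Category.assoc _ _ _

theorem CylinderIneq.rhs_comp {Y : C} (h : Y ⟶ Z)
    (φ : ∀ i : Σ d, W.obj d, Z ⟶ F.toFunctor.obj i.1) (k : CylinderIneq W) :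
    rhs F (fun i => h ≫ φ i) k = h ≫ rhs F φ k := by
  rcases k with ⟨_, ⟨_, _⟩, _⟩ | ⟨⟨_, _, _, _⟩, _ | _⟩ <;>
    first | rfl | exact Category.assoc _ _ _

end CylinderIneq

end PosEnr

namespace Cylinder

variable {D : Type u'} [Category.{v'} D] [PosEnriched D] {W : PosWeight D}
  {C : Type u} [Category.{v} C] [PosEnriched C] {F : PosFunctor D C} {Z : C}

def ofCylinderIneq (φ : ∀ i : Σ d, W.obj d, Z ⟶ F.toFunctor.obj i.1)
    (hφ : ∀ k : CylinderIneq W, CylinderIneq.lhs F φ k ≤ CylinderIneq.rhs F φ k) :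
    Cylinder W F Z where
  app d x := φ ⟨d, x⟩
  monotone d x y hxy := hφ (.inl ⟨d, ⟨(x, y), hxy⟩⟩)
  naturality f x :=
    le_antisymm (hφ (.inr (⟨_, _, f, x⟩, true))) (hφ (.inr (⟨_, _, f, x⟩, false)))

theorem cylinderIneq (c : Cylinder W F Z) (k : CylinderIneq W) :
    CylinderIneq.lhs F (fun i => c.app i.1 i.2) k ≤
      CylinderIneq.rhs F (fun i => c.app i.1 i.2) k := by
  rcases k with ⟨d, ⟨_, _⟩, hxy⟩ | ⟨⟨_, _, f, x⟩, _ | _⟩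
  · exact c.monotone d _ _ hxy
  · exact (c.naturality f x).ge
  · exact (c.naturality f x).le

end Cylinder

/-- weak finite products and weak inserters imply all weak finite weighted
limits. -/
theorem statement2 {C : Type u} [Category.{v} C] [PosEnriched C]
    (hprod : ∀ (ι : Type) (_ : Finite ι) (Xf : ι → C),
      ∃ (P : C) (p : ∀ i, P ⟶ Xf i), PosEnr.IsWeakProdFam Xf P p)
    (hins : ∀ {X Y : C} (f g : X ⟶ Y),
      ∃ (E : C) (e : E ⟶ X), PosEnr.IsWeakInserter f g e) :
    WeaklyLex C := by
  intro D _ _ W F ⟨_, _, _⟩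
  obtain ⟨P, p, hp⟩ := hprod (Σ d, W.obj d) inferInstance fun i => F.toFunctor.obj i.1
  obtain ⟨E, e, he_le, he_fac⟩ :=
    exists_isWeakJointInserter hins (CylinderIneq.lhs F p) (CylinderIneq.rhs F p)
  refine ⟨E, .ofCylinderIneq (fun i => e ≫ p i) fun k => ?_, fun Z φ => ?_⟩
  · simpa only [CylinderIneq.lhs_comp, CylinderIneq.rhs_comp] using he_le k
  · obtain ⟨h, hh⟩ := hp fun i => φ.app i.1 i.2
    obtain ⟨u, rfl⟩ := he_fac h fun k => by
      simpa only [← CylinderIneq.lhs_comp, ← CylinderIneq.rhs_comp, hh] using φ.cylinderIneq k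
    exact ⟨u, fun d x => (Category.assoc _ _ _).symm.trans (hh ⟨d, x⟩)⟩
end

section
/- Let C be a Pos-enriched category and P a full subcategory which is a projective cover of C. If C has limits weighted by a weight W, then P has weak W-weighted limits. In particular, if C has all finite weighted limits, then P is weakly lex. -/
open CategoryTheory

universe w v u v' u' v'' u''

open PosEnr

/-! ## The exact completion -/

open PosEnr

/-! Take the `W`-limit `L` of the diagram in `C` and an so-cover `e : P ⟶ L`
with `P` in the projective cover. Every cylinder from an object `Z` of the cover factors
through `L`, and since `Z` is so-projective the factorization lifts along `e`. -/

namespace Cylinder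

variable {D : Type u'} [Category.{v'} D] [PosEnriched D] {W : PosWeight D}
  {E : Type u} [Category.{v} E] [PosEnriched E] {F : PosFunctor D E}

def precomp {L L' : E} (e : L' ⟶ L) (c : Cylinder W F L) : Cylinder W F L' where
  app d x := e ≫ c.app d x
  monotone d x y h := comp_mono' le_rfl (c.monotone d x y h)
  naturality f x := by rw [Category.assoc, c.naturality]

theorem exists_lift_of_isWeakWeightedLimitP_of_isSo {L P Z : E} {c : Cylinder W F L}
    (hc : IsWeakWeightedLimitP W F L c) {e : P ⟶ L} (he : IsSo e) (hZ : SoProjective Z)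
    (φ : Cylinder W F Z) : ∃ h : Z ⟶ P, ∀ d x, h ≫ (c.precomp e).app d x = φ.app d x := by
  obtain ⟨k, hk⟩ := hc Z φ
  obtain ⟨h, rfl⟩ := hZ e he k
  exact ⟨h, fun d x => by rw [precomp, ← Category.assoc, hk]⟩

end Cylinder

namespace CategoryTheory.ObjectProperty

variable {C : Type u} [Category.{v} C] [PosEnriched C] (Pobj : C → Prop)

def posι : PosFunctor (FullSubcategory Pobj) C := ⟨ι Pobj, id⟩

variable {Pobj} {D : Type u'} [Category.{v'} D] [PosEnriched D] {W : PosWeight D}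
  {G : PosFunctor D (FullSubcategory Pobj)}

def cylinderLift {P : FullSubcategory Pobj} (c : Cylinder W (G.comp (posι Pobj)) P.obj) :
    Cylinder W G P where
  app d x := homMk (c.app d x)
  monotone := c.monotone
  naturality f x := hom_ext _ (c.naturality f x)

theorem isWeakWeightedLimitP_cylinderLift {P : FullSubcategory Pobj}
    (c : Cylinder W (G.comp (posι Pobj)) P.obj)
    (hc : ∀ (Z : FullSubcategory Pobj) (φ : Cylinder W (G.comp (posι Pobj)) Z.obj),
      ∃ h : Z.obj ⟶ P.obj, ∀ d x, h ≫ c.app d x = φ.app d x) :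
    IsWeakWeightedLimitP W G P (cylinderLift c) := by
  intro Z φ
  obtain ⟨h, hh⟩ := hc Z (φ.mapF (posι Pobj))
  exact ⟨homMk h, fun d x => hom_ext _ (hh d x)⟩

theorem exists_isWeakWeightedLimitP_of_projectiveCover
    (hproj : ∀ P : C, Pobj P → SoProjective P)
    (hcov : ∀ X : C, ∃ P : C, Pobj P ∧ ∃ e : P ⟶ X, IsSo e)
    (hlim : ∀ F : PosFunctor D C, ∃ (L : C) (c : Cylinder W F L), IsWeakWeightedLimitP W F L c)
    (G : PosFunctor D (FullSubcategory Pobj)) :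
    ∃ (L : FullSubcategory Pobj) (c : Cylinder W G L), IsWeakWeightedLimitP W G L c := by
  obtain ⟨L, c, hc⟩ := hlim (G.comp (posι Pobj))
  obtain ⟨P, hP, e, he⟩ := hcov L
  exact ⟨⟨P, hP⟩, cylinderLift (c.precomp e), isWeakWeightedLimitP_cylinderLift _ fun Z φ =>
    c.exists_lift_of_isWeakWeightedLimitP_of_isSo hc he (hproj Z.obj Z.property) φ⟩

end CategoryTheory.ObjectProperty

/-- a projective cover of a category with `W`-weighted limits has weak
`W`-weighted limits; in particular a projective cover of a finitely complete category is
weakly lex. -/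
theorem statement3 {C : Type u} [Category.{v} C] [PosEnriched C]
    (Pobj : C → Prop)
    (hproj : ∀ P : C, Pobj P → PosEnr.SoProjective P)
    (hcov : ∀ X : C, ∃ P : C, Pobj P ∧ ∃ e : P ⟶ X, PosEnr.IsSo e) :
    (∀ (D : Type) [SmallCategory D] [PosEnriched D] (W : PosWeight D),
      (∀ G : PosFunctor D C, ∃ (L : C) (c : Cylinder W G L), IsWeightedLimitP W G L c) →
      ∀ G : PosFunctor D (ObjectProperty.FullSubcategory Pobj),
        ∃ (L : ObjectProperty.FullSubcategory Pobj) (c : Cylinder W G L), IsWeakWeightedLimitP W G L c) ∧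
    (HasFiniteWeightedLimitsP C → WeaklyLex (ObjectProperty.FullSubcategory Pobj)) := by
  have weak_of_strong : ∀ (D : Type) [SmallCategory D] [PosEnriched D] (W : PosWeight D),
      (∀ G : PosFunctor D C, ∃ (L : C) (c : Cylinder W G L), IsWeightedLimitP W G L c) →
      ∀ G : PosFunctor D (ObjectProperty.FullSubcategory Pobj),
        ∃ (L : ObjectProperty.FullSubcategory Pobj) (c : Cylinder W G L),
          IsWeakWeightedLimitP W G L c := fun D _ _ W hlim =>
    ObjectProperty.exists_isWeakWeightedLimitP_of_projectiveCover hproj hcov fun F =>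
      (hlim F).imp fun _ => Exists.imp fun _ hc => hc.1
  exact ⟨weak_of_strong, fun hfin D _ _ W G hW =>
    weak_of_strong D W (fun F => hfin D W F hW) G⟩
end

section
/- For a weakly lex Pos-enriched category C, the exact completion C_ex has inserters: given [f],[g] : (X,R) → (Y,S), taking E a weak limit over the diagram (f,g,s₀,s₁) and R̃ the appropriate weak limit restricting R to E, the pair (E, R̃) with [e] : (E,R̃) → (X,R) is an inserter of ([f],[g]) in C_ex. -/
open CategoryTheory

universe w v u v' u' v'' u''

open PosEnr

/-! ## The exact completion -/

open PosEnr

/-!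
Pick representatives `f, g : X → Y`. A weak limit `E` of `(f, g, s₀, s₁)` comes with
`e : E → X` and `σ : E → S` such that `s₀σ = fe` and `s₁σ = ge`, so `[f][e] ≤ [g][e]`, and any
`h` with `[f][h] ≤ [g][h]` factors as `h = ek` in `C`. The weak limit `R̃` restricting `R` along
`e` is such that a map into `E` is compatible, and two maps into `E` are related, as soon as
their composites with `e` are. Hence `[e]` reflects the order and `[e][k] = [h]` in `C_ex`.
Both weak limits are weak multiequalizers, which exist in a weakly lex category.
-/

open Limits

abbrev discretePosEnriched (D : Type u') [Category.{v'} D] : PosEnriched D where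
  homOrder _ _ :=
    { le := (· = ·)
      le_refl := fun _ => rfl
      le_trans := fun _ _ _ => Eq.trans
      le_antisymm := fun _ _ h _ => h }
  comp_mono h h' := by
    change _ = _ at h h' ⊢
    rw [h, h']

def conicalWeight (D : Type u') [Category.{v'} D] [PosEnriched D] : PosWeight D where
  obj _ := PUnit
  po _ := inferInstance
  map _ x := x
  map_monotone _ _ _ h := h
  map_id _ _ := rfl
  map_comp _ _ _ := rfl
  map_le _ _ := le_rfl

theorem conicalWeight_isFiniteWeight (D : Type u') [Category.{v'} D] [PosEnriched D]
    [Finite D] [∀ d d' : D, Finite (d ⟶ d')] : (conicalWeight D).IsFiniteWeight :=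
  ⟨inferInstance, inferInstance, fun _ => inferInstanceAs (Finite PUnit)⟩

def PosFunctor.ofDiscrete {D : Type u'} [Category.{v'} D] {C : Type u} [Category.{v} C]
    [PosEnriched C] (F : D ⥤ C) :
    letI := discretePosEnriched D
    PosFunctor D C :=
  letI := discretePosEnriched D
  { toFunctor := F
    map_le := fun {_ _ f g} (h : f = g) => h ▸ le_rfl }

namespace WeaklyLex

variable {C : Type u} [Category.{v} C] [PosEnriched C]

theorem exists_weakMultiequalizer (hC : WeaklyLex C) {J : MulticospanShape.{0, 0}}
    [Finite J.L] [Finite J.R] (I : MulticospanIndex J C) :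
    ∃ K : Multifork I, ∀ K' : Multifork I, ∃ u : K'.pt ⟶ K.pt, ∀ a, u ≫ K.ι a = K'.ι a := by
  classical
  have := Fintype.ofFinite J.L
  have := Fintype.ofFinite J.R
  let := discretePosEnriched (WalkingMulticospan J)
  obtain ⟨L, c, hL⟩ := hC _ (conicalWeight _) (PosFunctor.ofDiscrete I.multicospan)
    (conicalWeight_isFiniteWeight _)
  refine ⟨Multifork.ofι I L (fun a => c.app (.left a) ⟨⟩) fun b =>
    (c.naturality (.fst b) ⟨⟩).trans (c.naturality (.snd b) ⟨⟩).symm, fun K' => ?_⟩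
  obtain ⟨u, hu⟩ := hL K'.pt
    { app := fun d _ => K'.π.app d
      monotone := fun _ _ _ _ => le_rfl
      naturality := fun f _ => K'.w f }
  exact ⟨u, fun a => hu (.left a) ⟨⟩⟩

theorem exists_weakPullback_pair (hC : WeaklyLex C) {P Q X : C} (p0 p1 : P ⟶ X)
    (q0 q1 : Q ⟶ X) :
    ∃ (L : C) (a : L ⟶ P) (b : L ⟶ Q), a ≫ p0 = b ≫ q0 ∧ a ≫ p1 = b ≫ q1 ∧
      ∀ {Z : C} (a' : Z ⟶ P) (b' : Z ⟶ Q), a' ≫ p0 = b' ≫ q0 → a' ≫ p1 = b' ≫ q1 →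
        ∃ u : Z ⟶ L, u ≫ a = a' ∧ u ≫ b = b' := by
  let I : MulticospanIndex ⟨Bool, Bool, fun _ => false, fun _ => true⟩ C :=
    { left := fun i => cond i Q P
      right := fun _ => X
      fst := fun i => cond i p1 p0
      snd := fun i => cond i q1 q0 }
  obtain ⟨K, hK⟩ := hC.exists_weakMultiequalizer I
  refine ⟨K.pt, K.ι false, K.ι true, K.condition false, K.condition true, fun a' b' h0 h1 => ?_⟩
  obtain ⟨u, hu⟩ := hK
    (Multifork.ofι I _ (fun | false => a' | true => b') fun | false => h0 | true => h1)
  exact ⟨u, hu false, hu true⟩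

end WeaklyLex

namespace ExObj

variable {C : Type u} [Category.{v} C] [PosEnriched C]

/-- The paper's `R̃`: a weak limit of `E ⟶ A.X ⟵ A.R ⟶ A.X ⟵ E`, of which only the
weak universality in the two `E`-legs is recorded. -/
structure WeakRestriction (A : ExObj C) {E : C} (e : E ⟶ A.X) where
  R : C
  ρ : R ⟶ A.R
  t0 : R ⟶ E
  t1 : R ⟶ E
  ρ_r0 : ρ ≫ A.r0 = t0 ≫ e
  ρ_r1 : ρ ≫ A.r1 = t1 ≫ e
  exists_lift : ∀ {Z : C} (a0 a1 : Z ⟶ E) (s : Z ⟶ A.R), s ≫ A.r0 = a0 ≫ e →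
    s ≫ A.r1 = a1 ≫ e → ∃ u : Z ⟶ R, u ≫ t0 = a0 ∧ u ≫ t1 = a1

theorem nonempty_weakRestriction (hC : WeaklyLex C) (A : ExObj C) {E : C} (e : E ⟶ A.X) :
    Nonempty (A.WeakRestriction e) := by
  let I : MulticospanIndex ⟨Option Bool, Bool, fun _ => none, some⟩ C :=
    { left := fun o => o.elim A.R fun _ => E
      right := fun _ => A.X
      fst := fun i => cond i A.r1 A.r0
      snd := fun _ => e }
  obtain ⟨K, hK⟩ := hC.exists_weakMultiequalizer I
  refine ⟨⟨K.pt, K.ι none, K.ι (some false), K.ι (some true), K.condition false,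
    K.condition true, fun a0 a1 s h0 h1 => ?_⟩⟩
  obtain ⟨u, hu⟩ := hK (Multifork.ofι I _ (fun | none => s | some false => a0 | some true => a1)
    fun | false => h0 | true => h1)
  exact ⟨u, hu (some false), hu (some true)⟩

namespace WeakRestriction

variable {A : ExObj C} {E : C} {e : E ⟶ A.X} (W : A.WeakRestriction e)

def toExObj : ExObj C where
  X := E
  R := W.R
  r0 := W.t0
  r1 := W.t1
  orefl a0 a1 h := by
    obtain ⟨s, h0, h1⟩ := A.orefl (a0 ≫ e) (a1 ≫ e) (comp_mono' h le_rfl)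
    exact W.exists_lift a0 a1 s h0 h1
  tra u v huv := by
    obtain ⟨s, h0, h1⟩ := A.tra (u ≫ W.ρ) (v ≫ W.ρ) (by
      simp only [Category.assoc, W.ρ_r0, W.ρ_r1, reassoc_of% huv])
    exact W.exists_lift _ _ s (by rw [h0, Category.assoc, W.ρ_r0, Category.assoc])
      (by rw [h1, Category.assoc, W.ρ_r1, Category.assoc])

def ι : W.toExObj ⟶ A :=
  Quotient.mk _ ⟨e, W.ρ, W.ρ_r0, W.ρ_r1⟩

theorem pre_of_pre_comp {Z : ExObj C} {u v : Z.X ⟶ E} (h : Pre Z A (u ≫ e) (v ≫ e)) :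
    Pre Z W.toExObj u v := by
  obtain ⟨s, h0, h1⟩ := h
  exact W.exists_lift u v s h0 h1

theorem compat_of_compat_comp {Z : ExObj C} {u : Z.X ⟶ E} (h : Compat Z A (u ≫ e)) :
    Compat Z W.toExObj u := by
  obtain ⟨s, h0, h1⟩ := h
  exact W.exists_lift _ _ s (h0.trans (Category.assoc _ _ _).symm)
    (h1.trans (Category.assoc _ _ _).symm)

theorem orderMono_ι : OrderMono W.ι := by
  intro Z u v
  induction u using Quotient.inductionOn
  induction v using Quotient.inductionOn
  exact W.pre_of_pre_comp

theorem exists_comp_ι_eq {Z : ExObj C} {h : Z.X ⟶ A.X} (hh : Compat Z A h) (u : Z.X ⟶ E)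
    (hu : u ≫ e = h) : ∃ k : Z ⟶ W.toExObj, k ≫ W.ι = Quotient.mk _ ⟨h, hh⟩ := by
  subst hu
  exact ⟨Quotient.mk _ ⟨u, W.compat_of_compat_comp hh⟩, rfl⟩

end WeakRestriction

end ExObj

/-- the exact completion of a weakly lex `Pos`-category has inserters. -/
theorem statement5 {C : Type u} [Category.{v} C] [PosEnriched C] (hC : WeaklyLex C)
    (A B : ExObj C) (f g : A ⟶ B) :
    ∃ (E : ExObj C) (e : E ⟶ A), PosEnr.IsInserterP f g e := by
  obtain ⟨⟨f, -⟩, rfl⟩ := Quotient.exists_rep f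
  obtain ⟨⟨g, -⟩, rfl⟩ := Quotient.exists_rep g
  obtain ⟨E, σ, e, hσ0, hσ1, hE⟩ := hC.exists_weakPullback_pair B.r0 B.r1 f g
  obtain ⟨W⟩ := ExObj.nonempty_weakRestriction hC A e
  refine ⟨W.toExObj, W.ι, ⟨σ, hσ0, hσ1⟩, fun {Z} h hle => ?_, W.orderMono_ι⟩
  obtain ⟨⟨h, hh⟩, rfl⟩ := Quotient.exists_rep h
  obtain ⟨τ, hτ0, hτ1⟩ := hle
  obtain ⟨u, -, hu⟩ := hE τ h hτ0 hτ1
  exact W.exists_comp_ι_eq hh u hu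
end
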